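/- arXiv:2604.05639 — 2 statements merged into one kernel-verified Lean document; each statement's English description precedes it below -/
import Mathlib

section
/- Fix t and a probability space carrying random variables (S_t, A_t, Γ_t) with E[Γ_t²] < ∞. Let q* (s,a) := E[Γ_t | S_t = s, A_t = a] and let H* be a σ(S_t,A_t)-measurable square-integrable function such that G(q) := γ^{t−1} E[H*(S_t,A_t) q(S_t,A_t)] for every square-integrable q (i.e., H* represents the functional G). Define the augmented functional G̃(q, H) := G(q) + γ^{t−1} E[H(S_t,A_t)(Γ_t − q(S_t,A_t))]. Then for any square-integrable q and any square-integrable σ(S_t,A_t)-measurable H, one has G̃(q, H) − G(q*) = γ^{t−1} E[(H*(S_t,A_t) − H(S_t,A_t))(q(S_t,A_t) − q*(S_t,A_t))]. -/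
/-!
Pointwise, `H* q + H (Γ - q) - H* q* = (H* - H) (q - q*) + H (Γ - q*)`, and the last term has
zero mean: `H` is measurable for the σ-algebra generated by `(S, A)`, so it can be pulled out of
the conditional expectation `E[Γ | S, A] = q*`.
-/

open MeasureTheory ProbabilityTheory

section

variable {Ω : Type*} {m m₀ : MeasurableSpace Ω} {μ : Measure Ω}

theorem integral_mul_condExp_of_stronglyMeasurable_left (hm : m ≤ m₀)
    [SigmaFinite (μ.trim hm)] {f g : Ω → ℝ} (hg : StronglyMeasurable[m] g)
    (hgf : Integrable (g * f) μ) (hf : Integrable f μ) :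
    ∫ x, g x * μ[f|m] x ∂μ = ∫ x, g x * f x ∂μ := by
  calc ∫ x, g x * μ[f|m] x ∂μ = ∫ x, μ[g * f|m] x ∂μ :=
        integral_congr_ae (condExp_mul_of_stronglyMeasurable_left hg hgf hf).symm
    _ = ∫ x, g x * f x ∂μ := integral_condExp hm

theorem integral_mixed_bias [IsFiniteMeasure μ] (hm : m ≤ m₀) {Γ q qstar H Hstar : Ω → ℝ}
    (hΓ : MemLp Γ 2 μ) (hqstar : qstar =ᵐ[μ] μ[Γ|m]) (hqstarL2 : MemLp qstar 2 μ)
    (hq : MemLp q 2 μ) (hHm : StronglyMeasurable[m] H) (hH : MemLp H 2 μ)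
    (hHstar : MemLp Hstar 2 μ) :
    (∫ x, Hstar x * q x ∂μ + ∫ x, H x * (Γ x - q x) ∂μ) - ∫ x, Hstar x * qstar x ∂μ
      = ∫ x, (Hstar x - H x) * (q x - qstar x) ∂μ := by
  have hprod : ∀ {f g : Ω → ℝ}, MemLp f 2 μ → MemLp g 2 μ → Integrable (fun x => f x * g x) μ :=
    fun hf hg => hf.integrable_mul hg
  have horth : ∫ x, H x * (Γ x - qstar x) ∂μ = 0 := by
    have hcond : ∫ x, H x * qstar x ∂μ = ∫ x, H x * Γ x ∂μ := by
      rw [← integral_mul_condExp_of_stronglyMeasurable_left hm hHm (hprod hH hΓ)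
        (hΓ.integrable one_le_two)]
      refine integral_congr_ae ?_
      filter_upwards [hqstar] with x hx
      rw [hx]
    simp only [mul_sub]
    rw [integral_sub (hprod hH hΓ) (hprod hH hqstarL2), hcond, sub_self]
  calc (∫ x, Hstar x * q x ∂μ + ∫ x, H x * (Γ x - q x) ∂μ) - ∫ x, Hstar x * qstar x ∂μ
      = ∫ x, (Hstar x * q x + H x * (Γ x - q x) - Hstar x * qstar x) ∂μ := by
        rw [integral_sub, integral_add]
        exacts [hprod hHstar hq, hprod hH (hΓ.sub hq),
          (hprod hHstar hq).add (hprod hH (hΓ.sub hq)), hprod hHstar hqstarL2]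
    _ = ∫ x, ((Hstar x - H x) * (q x - qstar x) + H x * (Γ x - qstar x)) ∂μ := by
        congr 1; ext x; ring
    _ = ∫ x, (Hstar x - H x) * (q x - qstar x) ∂μ := by
        rw [integral_add, horth, add_zero]
        exacts [hprod (hHstar.sub hH) (hq.sub hqstarL2), hprod hH (hΓ.sub hqstarL2)]

end

theorem mixed_bias_identity_general
    {Ω 𝓢 𝓐 : Type*} [MeasurableSpace Ω] [MeasurableSpace 𝓢] [MeasurableSpace 𝓐]
    (P : Measure Ω) [IsProbabilityMeasure P]
    (t : ℕ) (γ : ℝ)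
    (S : Ω → 𝓢) (A : Ω → 𝓐) (hS : Measurable S) (hA : Measurable A)
    (Γ : Ω → ℝ) (hΓ : MemLp Γ 2 P)
    (qstar : 𝓢 → 𝓐 → ℝ)
    -- q* is the conditional expectation of Γ given (S,A):
    (hqstar : (fun ω => qstar (S ω) (A ω))
      =ᵐ[P] P[Γ|MeasurableSpace.comap (fun ω => (S ω, A ω)) inferInstance])
    (hqstarL2 : MemLp (fun ω => qstar (S ω) (A ω)) 2 P)
    (Hstar : 𝓢 → 𝓐 → ℝ)
    (hHstarL2 : MemLp (fun ω => Hstar (S ω) (A ω)) 2 P)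
    (q : 𝓢 → 𝓐 → ℝ)
    (hqL2 : MemLp (fun ω => q (S ω) (A ω)) 2 P)
    (H : 𝓢 → 𝓐 → ℝ) (hHMeas : Measurable (Function.uncurry H))
    (hHL2 : MemLp (fun ω => H (S ω) (A ω)) 2 P) :
    (γ ^ (t - 1) * ∫ ω, Hstar (S ω) (A ω) * q (S ω) (A ω) ∂P
        + γ ^ (t - 1) * ∫ ω, H (S ω) (A ω) * (Γ ω - q (S ω) (A ω)) ∂P)
      - γ ^ (t - 1) * ∫ ω, Hstar (S ω) (A ω) * qstar (S ω) (A ω) ∂P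
    = γ ^ (t - 1) * ∫ ω, (Hstar (S ω) (A ω) - H (S ω) (A ω))
        * (q (S ω) (A ω) - qstar (S ω) (A ω)) ∂P := by
  have hSA : Measurable[MeasurableSpace.comap (fun ω => (S ω, A ω)) inferInstance]
      fun ω => (S ω, A ω) := comap_measurable _
  rw [← mul_add, ← mul_sub]
  exact congrArg _ <| integral_mixed_bias (hS.prodMk hA).comap_le hΓ hqstar hqstarL2 hqL2
    (hHMeas.comp hSA).stronglyMeasurable hHL2 hHstarL2

/-- Mixed-bias identity (Lemma 3.1): for the augmented stagewise functional
`G̃(q,H) = G(q) + γ^{t−1} E[H(S,A)(Γ − q(S,A))]` with `G(q) = γ^{t−1} E[H*(S,A) q(S,A)]`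
and `q*(s,a) = E[Γ|S=s,A=a]`, one has
`G̃(q,H) − G(q*) = γ^{t−1} E[(H* − H)(q − q*)]`. -/
theorem mixed_bias_identity
    {Ω 𝓢 𝓐 : Type*} [MeasurableSpace Ω] [MeasurableSpace 𝓢] [MeasurableSpace 𝓐]
    (P : Measure Ω) [IsProbabilityMeasure P]
    (t : ℕ) (γ : ℝ) (hγ : γ ∈ Set.Ioc (0 : ℝ) 1)
    (S : Ω → 𝓢) (A : Ω → 𝓐) (hS : Measurable S) (hA : Measurable A)
    (Γ : Ω → ℝ) (hΓ : MemLp Γ 2 P)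
    (qstar : 𝓢 → 𝓐 → ℝ) (hqstarMeas : Measurable (Function.uncurry qstar))
    -- q* is the conditional expectation of Γ given (S,A):
    (hqstar : (fun ω => qstar (S ω) (A ω))
      =ᵐ[P] P[Γ|MeasurableSpace.comap (fun ω => (S ω, A ω)) inferInstance])
    (hqstarL2 : MemLp (fun ω => qstar (S ω) (A ω)) 2 P)
    (Hstar : 𝓢 → 𝓐 → ℝ) (hHstarMeas : Measurable (Function.uncurry Hstar))
    (hHstarL2 : MemLp (fun ω => Hstar (S ω) (A ω)) 2 P)
    (q : 𝓢 → 𝓐 → ℝ) (hqMeas : Measurable (Function.uncurry q))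
    (hqL2 : MemLp (fun ω => q (S ω) (A ω)) 2 P)
    (H : 𝓢 → 𝓐 → ℝ) (hHMeas : Measurable (Function.uncurry H))
    (hHL2 : MemLp (fun ω => H (S ω) (A ω)) 2 P) :
    (γ ^ (t - 1) * ∫ ω, Hstar (S ω) (A ω) * q (S ω) (A ω) ∂P
        + γ ^ (t - 1) * ∫ ω, H (S ω) (A ω) * (Γ ω - q (S ω) (A ω)) ∂P)
      - γ ^ (t - 1) * ∫ ω, Hstar (S ω) (A ω) * qstar (S ω) (A ω) ∂P
    = γ ^ (t - 1) * ∫ ω, (Hstar (S ω) (A ω) - H (S ω) (A ω))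
        * (q (S ω) (A ω) - qstar (S ω) (A ω)) ∂P :=
  mixed_bias_identity_general P t γ S A hS hA Γ hΓ qstar hqstar hqstarL2 Hstar hHstarL2 q hqL2 H
    hHMeas hHL2
end

section
/- Under the setup of the mixed-bias identity: if H = H* then G̃(q, H*) = G(q*) for every square-integrable q; and if q = q* then G̃(q*, H) = G(q*) for every square-integrable σ(S_t,A_t)-measurable H. -/
/-!
Both identities reduce to the orthogonality `E[H(S,A) (Γ − q*(S,A))] = 0` for every
square-integrable `H`: since `H(S,A)` is `σ(S,A)`-measurable it can be pulled inside
`E[· | σ(S,A)]`, and the tower property gives `E[H(S,A) Γ] = E[H(S,A) E[Γ | S,A]]`.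
With `H = H*` the correction term turns `G(q)` into `G(q*)`; with `q = q*` it vanishes.
-/

open MeasureTheory ProbabilityTheory

lemma integral_mul_sub_of_memLp {Ω : Type*} [MeasurableSpace Ω] {μ : Measure Ω}
    {f g h : Ω → ℝ} (hf : MemLp f 2 μ) (hg : MemLp g 2 μ) (hh : MemLp h 2 μ) :
    ∫ ω, f ω * (g ω - h ω) ∂μ = ∫ ω, f ω * g ω ∂μ - ∫ ω, f ω * h ω ∂μ := by
  simp_rw [mul_sub]
  exact integral_sub (hf.integrable_mul hg) (hf.integrable_mul hh)

lemma integral_mul_condExp_of_stronglyMeasurable {Ω : Type*} {m m₀ : MeasurableSpace Ω}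
    {μ : Measure Ω} (hm : m ≤ m₀) [SigmaFinite (μ.trim hm)] {f g : Ω → ℝ}
    (hf : StronglyMeasurable[m] f) (hfg : Integrable (f * g) μ) (hg : Integrable g μ) :
    ∫ ω, f ω * (μ[g | m]) ω ∂μ = ∫ ω, f ω * g ω ∂μ :=
  calc ∫ ω, f ω * (μ[g | m]) ω ∂μ = ∫ ω, (μ[f * g | m]) ω ∂μ :=
        integral_congr_ae (condExp_mul_of_stronglyMeasurable_left hf hfg hg).symm
    _ = ∫ ω, f ω * g ω ∂μ := integral_condExp hm

lemma integral_comp_mul_eq_of_ae_eq_condExp {Ω β : Type*} [MeasurableSpace Ω]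
    [MeasurableSpace β] {μ : Measure Ω} [IsFiniteMeasure μ] {X : Ω → β} (hX : Measurable X)
    {h : β → ℝ} (hh : Measurable h) (hhX : MemLp (fun ω => h (X ω)) 2 μ) {g q : Ω → ℝ}
    (hg : MemLp g 2 μ) (hq : q =ᵐ[μ] μ[g | MeasurableSpace.comap X inferInstance]) :
    ∫ ω, h (X ω) * g ω ∂μ = ∫ ω, h (X ω) * q ω ∂μ := by
  have hhX_meas : StronglyMeasurable[MeasurableSpace.comap X inferInstance]
      fun ω => h (X ω) :=
    (hh.comp (comap_measurable X)).stronglyMeasurable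
  rw [← integral_mul_condExp_of_stronglyMeasurable hX.comap_le hhX_meas
    (hhX.integrable_mul hg) (hg.integrable one_le_two)]
  refine integral_congr_ae ?_
  filter_upwards [hq] with ω hω
  simp only [hω]

theorem double_robustness_general
    {Ω 𝓢 𝓐 : Type*} [MeasurableSpace Ω] [MeasurableSpace 𝓢] [MeasurableSpace 𝓐]
    (P : Measure Ω) [IsProbabilityMeasure P]
    (t : ℕ) (γ : ℝ)
    (S : Ω → 𝓢) (A : Ω → 𝓐) (hS : Measurable S) (hA : Measurable A)
    (Γ : Ω → ℝ) (hΓ : MemLp Γ 2 P)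
    (qstar : 𝓢 → 𝓐 → ℝ)
    (hqstar : (fun ω => qstar (S ω) (A ω))
      =ᵐ[P] P[Γ|MeasurableSpace.comap (fun ω => (S ω, A ω)) inferInstance])
    (hqstarL2 : MemLp (fun ω => qstar (S ω) (A ω)) 2 P)
    (Hstar : 𝓢 → 𝓐 → ℝ) (hHstarMeas : Measurable (Function.uncurry Hstar))
    (hHstarL2 : MemLp (fun ω => Hstar (S ω) (A ω)) 2 P) :
    (∀ q : 𝓢 → 𝓐 → ℝ, Measurable (Function.uncurry q) →
      MemLp (fun ω => q (S ω) (A ω)) 2 P →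
      γ ^ (t - 1) * ∫ ω, Hstar (S ω) (A ω) * q (S ω) (A ω) ∂P
        + γ ^ (t - 1) * ∫ ω, Hstar (S ω) (A ω) * (Γ ω - q (S ω) (A ω)) ∂P
      = γ ^ (t - 1) * ∫ ω, Hstar (S ω) (A ω) * qstar (S ω) (A ω) ∂P) ∧
    (∀ H : 𝓢 → 𝓐 → ℝ, Measurable (Function.uncurry H) →
      MemLp (fun ω => H (S ω) (A ω)) 2 P →
      γ ^ (t - 1) * ∫ ω, Hstar (S ω) (A ω) * qstar (S ω) (A ω) ∂P
        + γ ^ (t - 1) * ∫ ω, H (S ω) (A ω) * (Γ ω - qstar (S ω) (A ω)) ∂P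
      = γ ^ (t - 1) * ∫ ω, Hstar (S ω) (A ω) * qstar (S ω) (A ω) ∂P) := by
  have tower : ∀ H : 𝓢 → 𝓐 → ℝ, Measurable (Function.uncurry H) →
      MemLp (fun ω => H (S ω) (A ω)) 2 P →
      ∫ ω, H (S ω) (A ω) * Γ ω ∂P = ∫ ω, H (S ω) (A ω) * qstar (S ω) (A ω) ∂P :=
    fun H hH hHL2 => integral_comp_mul_eq_of_ae_eq_condExp (hS.prodMk hA) hH hHL2 hΓ hqstar
  refine ⟨fun q _ hqL2 => ?_, fun H hH hHL2 => ?_⟩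
  · rw [← mul_add, integral_mul_sub_of_memLp hHstarL2 hΓ hqL2, add_sub_cancel,
      tower Hstar hHstarMeas hHstarL2]
  · rw [integral_mul_sub_of_memLp hHL2 hΓ hqstarL2, tower H hH hHL2, sub_self, mul_zero,
      add_zero]

/-- Double robustness: under the mixed-bias setup, `G̃(q, H*) = G(q*)` for every
square-integrable `q`, and `G̃(q*, H) = G(q*)` for every square-integrable
`σ(S,A)`-measurable `H`, where `G(q) = γ^{t−1} E[H*(S,A) q(S,A)]`,
`q*(s,a) = E[Γ|S=s,A=a]` and
`G̃(q,H) = G(q) + γ^{t−1} E[H(S,A)(Γ − q(S,A))]`. -/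
theorem double_robustness
    {Ω 𝓢 𝓐 : Type*} [MeasurableSpace Ω] [MeasurableSpace 𝓢] [MeasurableSpace 𝓐]
    (P : Measure Ω) [IsProbabilityMeasure P]
    (t : ℕ) (γ : ℝ) (hγ : γ ∈ Set.Ioc (0 : ℝ) 1)
    (S : Ω → 𝓢) (A : Ω → 𝓐) (hS : Measurable S) (hA : Measurable A)
    (Γ : Ω → ℝ) (hΓ : MemLp Γ 2 P)
    (qstar : 𝓢 → 𝓐 → ℝ) (hqstarMeas : Measurable (Function.uncurry qstar))
    (hqstar : (fun ω => qstar (S ω) (A ω))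
      =ᵐ[P] P[Γ|MeasurableSpace.comap (fun ω => (S ω, A ω)) inferInstance])
    (hqstarL2 : MemLp (fun ω => qstar (S ω) (A ω)) 2 P)
    (Hstar : 𝓢 → 𝓐 → ℝ) (hHstarMeas : Measurable (Function.uncurry Hstar))
    (hHstarL2 : MemLp (fun ω => Hstar (S ω) (A ω)) 2 P) :
    (∀ q : 𝓢 → 𝓐 → ℝ, Measurable (Function.uncurry q) →
      MemLp (fun ω => q (S ω) (A ω)) 2 P →
      γ ^ (t - 1) * ∫ ω, Hstar (S ω) (A ω) * q (S ω) (A ω) ∂P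
        + γ ^ (t - 1) * ∫ ω, Hstar (S ω) (A ω) * (Γ ω - q (S ω) (A ω)) ∂P
      = γ ^ (t - 1) * ∫ ω, Hstar (S ω) (A ω) * qstar (S ω) (A ω) ∂P) ∧
    (∀ H : 𝓢 → 𝓐 → ℝ, Measurable (Function.uncurry H) →
      MemLp (fun ω => H (S ω) (A ω)) 2 P →
      γ ^ (t - 1) * ∫ ω, Hstar (S ω) (A ω) * qstar (S ω) (A ω) ∂P
        + γ ^ (t - 1) * ∫ ω, H (S ω) (A ω) * (Γ ω - qstar (S ω) (A ω)) ∂P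
      = γ ^ (t - 1) * ∫ ω, Hstar (S ω) (A ω) * qstar (S ω) (A ω) ∂P) :=
  double_robustness_general P t γ S A hS hA Γ hΓ qstar hqstar hqstarL2 Hstar hHstarMeas hHstarL2
end
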